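/- arXiv:1411.0656 — 3 statements merged into one kernel-verified Lean document; each statement's English description precedes it below -/
import Mathlib

section
/- Let $N_+$ and $N_-$ be rank 2 integral lattices of signature $(1,1)$ with discriminants $-\Delta_\pm$, containing primitive vectors $A_\pm$ with $A_\pm^2 > 0$, and let $a_\pm$ be the positive generator of the image of the map $N_\pm \to \mathbb{Z}$, $v \mapsto v\cdot B_\pm$, where $B_\pm$ generates $A_\pm^\perp$ in $N_\pm$. Suppose $B_+^2 = B_-^2 =: B^2 < 0$ and $B^2$ divides $a_+ a_-$. Then the quotient $W := (N_+ \oplus N_-)/\langle B_+ - B_- \rangle$ carries a well-defined integral symmetric bilinear form extending those of $N_+$ and $N_-$, in which $A_+ \perp N_-$ and $A_- \perp N_+$. -/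
/-!
Glue `N₊` and `N₋` by the cross pairing `v·w = (v·B₊)(w·B₋)/B²`, which is integral because
`a₊ ∣ v·B₊`, `a₋ ∣ w·B₋` and `B² ∣ a₊a₋`. Since `B₊² = B₋² = B²`, the cross pairing with `B₊`
is `w ↦ B₋·w` and with `B₋` is `v ↦ B₊·v`, so `(B₊, -B₋)` is in the radical of the glued form
and the form descends to `W`. Orthogonality `A₊ ⊥ N₋` comes from `A₊·B₊ = 0`, and likewise for `A₋`.
-/

/-- The subgroup `⟨(B₊, -B₋)⟩` of `N₊ ⊕ N₋` by which one quotients to form `W`. -/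
def stmt2Rel (BP BM : Fin 2 → ℤ) : Submodule ℤ ((Fin 2 → ℤ) × (Fin 2 → ℤ)) :=
  Submodule.span ℤ {(BP, -BM)}

namespace LinearMap

variable {M N : Type*} [AddCommGroup M] [AddCommGroup N]

def divOfDvd₂ (B : M →ₗ[ℤ] N →ₗ[ℤ] ℤ) (d : ℤ) (hd : ∀ v w, d ∣ B v w) :
    M →ₗ[ℤ] N →ₗ[ℤ] ℤ :=
  mk₂ ℤ (fun v w => B v w / d)
    (fun v v' w => by rw [map_add, add_apply, Int.add_ediv_of_dvd_left (hd v w)])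
    (fun n v w => by rw [map_smul, smul_apply, smul_eq_mul, Int.mul_ediv_assoc _ (hd v w),
      smul_eq_mul])
    (fun v w w' => by rw [map_add, Int.add_ediv_of_dvd_left (hd v w)])
    (fun n v w => by rw [map_smul, smul_eq_mul, Int.mul_ediv_assoc _ (hd v w), smul_eq_mul])

theorem mul_divOfDvd₂_apply (B : M →ₗ[ℤ] N →ₗ[ℤ] ℤ) (d : ℤ) (hd : ∀ v w, d ∣ B v w) (v : M)
    (w : N) : d * B.divOfDvd₂ d hd v w = B v w :=
  Int.mul_ediv_cancel' (hd v w)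

end LinearMap

section Gluing

variable {M N : Type*} [AddCommGroup M] [AddCommGroup N]

open LinearMap

def glueForm (bM : M →ₗ[ℤ] M →ₗ[ℤ] ℤ) (bN : N →ₗ[ℤ] N →ₗ[ℤ] ℤ) (C : M →ₗ[ℤ] N →ₗ[ℤ] ℤ) :
    M × N →ₗ[ℤ] M × N →ₗ[ℤ] ℤ :=
  bM.compl₁₂ (fst ℤ M N) (fst ℤ M N) + bN.compl₁₂ (snd ℤ M N) (snd ℤ M N) +
    C.compl₁₂ (fst ℤ M N) (snd ℤ M N) + C.flip.compl₁₂ (snd ℤ M N) (fst ℤ M N)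

variable (bM : M →ₗ[ℤ] M →ₗ[ℤ] ℤ) (bN : N →ₗ[ℤ] N →ₗ[ℤ] ℤ) (C : M →ₗ[ℤ] N →ₗ[ℤ] ℤ)

theorem glueForm_apply (p q : M × N) :
    glueForm bM bN C p q = bM p.1 q.1 + bN p.2 q.2 + C p.1 q.2 + C q.1 p.2 :=
  rfl

@[simp]
theorem glueForm_inl_inl (v w : M) : glueForm bM bN C (v, 0) (w, 0) = bM v w := by
  simp [glueForm_apply]

@[simp]
theorem glueForm_inr_inr (v w : N) : glueForm bM bN C (0, v) (0, w) = bN v w := by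
  simp [glueForm_apply]

@[simp]
theorem glueForm_inl_inr (v : M) (w : N) : glueForm bM bN C (v, 0) (0, w) = C v w := by
  simp [glueForm_apply]

theorem isSymm_glueForm (hM : bM.IsSymm) (hN : bN.IsSymm) : (glueForm bM bN C).IsSymm := by
  refine ⟨fun p q => ?_⟩
  have hM₁ : bM p.1 q.1 = bM q.1 p.1 := hM.eq p.1 q.1
  have hN₂ : bN p.2 q.2 = bN q.2 p.2 := hN.eq p.2 q.2
  rw [RingHom.id_apply, glueForm_apply, glueForm_apply, hM₁, hN₂]
  ring

theorem glueForm_mem_ker {x₀ : M} {y₀ : N} (hx₀ : ∀ w, C x₀ w = bN y₀ w)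
    (hy₀ : ∀ v, C v y₀ = bM x₀ v) : (x₀, -y₀) ∈ ker (glueForm bM bN C) := by
  refine mem_ker.mpr (ext fun q => ?_)
  simp only [glueForm_apply, map_neg, LinearMap.neg_apply, hx₀, hy₀, LinearMap.zero_apply]
  ring

def crossPairing (x₀ : M) (y₀ : N) (d : ℤ) (hd : ∀ v w, d ∣ bM v x₀ * bN w y₀) :
    M →ₗ[ℤ] N →ₗ[ℤ] ℤ :=
  ((mul ℤ ℤ).compl₁₂ (bM.flip x₀) (bN.flip y₀)).divOfDvd₂ d hd

theorem crossPairing_apply (x₀ : M) (y₀ : N) (d : ℤ) (hd : ∀ v w, d ∣ bM v x₀ * bN w y₀)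
    (v : M) (w : N) : crossPairing bM bN x₀ y₀ d hd v w = bM v x₀ * bN w y₀ / d :=
  rfl

theorem mul_crossPairing_apply (x₀ : M) (y₀ : N) (d : ℤ) (hd : ∀ v w, d ∣ bM v x₀ * bN w y₀)
    (v : M) (w : N) : d * crossPairing bM bN x₀ y₀ d hd v w = bM v x₀ * bN w y₀ :=
  mul_divOfDvd₂_apply _ d hd v w

theorem glueForm_crossPairing_mem_ker (hM : bM.IsSymm) (hN : bN.IsSymm) {x₀ : M} {y₀ : N}
    {d : ℤ} (hd₀ : d ≠ 0) (hx₀ : bM x₀ x₀ = d) (hy₀ : bN y₀ y₀ = d)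
    (hd : ∀ v w, d ∣ bM v x₀ * bN w y₀) :
    (x₀, -y₀) ∈ ker (glueForm bM bN (crossPairing bM bN x₀ y₀ d hd)) := by
  refine glueForm_mem_ker _ _ _ (fun w => ?_) (fun v => ?_)
  · rw [crossPairing_apply, hx₀, Int.mul_ediv_cancel_left _ hd₀]
    exact hN.eq w y₀
  · rw [crossPairing_apply, hy₀, Int.mul_ediv_cancel _ hd₀]
    exact hM.eq v x₀

end Gluing

theorem stmt_2_general
    (bP bM : (Fin 2 → ℤ) →ₗ[ℤ] (Fin 2 → ℤ) →ₗ[ℤ] ℤ)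
    (hsymmP : ∀ x y, bP x y = bP y x) (hsymmM : ∀ x y, bM x y = bM y x)
    (AP AM : Fin 2 → ℤ)
    (BP BM : Fin 2 → ℤ)
    (hBPorth : bP AP BP = 0)
    (hBMorth : bM AM BM = 0)
    (hBsq : bP BP BP = bM BM BM) (hBneg : bP BP BP < 0)
    (aP aM : ℤ)
    (haPdvd : ∀ v, aP ∣ bP v BP)
    (haMdvd : ∀ v, aM ∣ bM v BM)
    (hdvd : bP BP BP ∣ aP * aM) :
    ∃ bW : (((Fin 2 → ℤ) × (Fin 2 → ℤ)) ⧸ stmt2Rel BP BM) →ₗ[ℤ]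
           (((Fin 2 → ℤ) × (Fin 2 → ℤ)) ⧸ stmt2Rel BP BM) →ₗ[ℤ] ℤ,
      (∀ x y, bW x y = bW y x) ∧
      (∀ v w : Fin 2 → ℤ,
        bW ((stmt2Rel BP BM).mkQ (v, 0)) ((stmt2Rel BP BM).mkQ (w, 0)) = bP v w) ∧
      (∀ v w : Fin 2 → ℤ,
        bW ((stmt2Rel BP BM).mkQ (0, v)) ((stmt2Rel BP BM).mkQ (0, w)) = bM v w) ∧
      (∀ v w : Fin 2 → ℤ,
        (bP BP BP) * bW ((stmt2Rel BP BM).mkQ (v, 0)) ((stmt2Rel BP BM).mkQ (0, w))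
          = (bP v BP) * (bM w BM)) ∧
      (∀ w : Fin 2 → ℤ,
        bW ((stmt2Rel BP BM).mkQ (AP, 0)) ((stmt2Rel BP BM).mkQ (0, w)) = 0) ∧
      (∀ v : Fin 2 → ℤ,
        bW ((stmt2Rel BP BM).mkQ (v, 0)) ((stmt2Rel BP BM).mkQ (0, AM)) = 0) := by
  have hP : bP.IsSymm := ⟨hsymmP⟩
  have hM : bM.IsSymm := ⟨hsymmM⟩
  have hd : ∀ v w, bP BP BP ∣ bP v BP * bM w BM := fun v w =>
    hdvd.trans (mul_dvd_mul (haPdvd v) (haMdvd w))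
  set F := glueForm bP bM (crossPairing bP bM BP BM _ hd)
  have hF : F.IsSymm := isSymm_glueForm _ _ _ hP hM
  have hker : stmt2Rel BP BM ≤ LinearMap.ker F := (Submodule.span_singleton_le_iff_mem _ _).mpr
    (glueForm_crossPairing_mem_ker _ _ hP hM hBneg.ne rfl hBsq.symm hd)
  refine ⟨hF.isRefl.liftQ₂ F _ hker, fun x y => ?_, glueForm_inl_inl _ _ _,
    glueForm_inr_inr _ _ _, fun v w => ?_, fun w => ?_, fun v => ?_⟩
  · induction x using Submodule.Quotient.induction_on
    induction y using Submodule.Quotient.induction_on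
    exact hF.eq _ _
  · exact (congrArg _ (glueForm_inl_inr _ _ _ v w)).trans
      (mul_crossPairing_apply _ _ _ _ _ hd v w)
  · simp [F, crossPairing_apply, hBPorth]
  · simp [F, crossPairing_apply, hBMorth]

/-- Sufficiency direction of Lemma 6.3: if `B₊² = B₋² =: B² < 0` and `B²` divides
`a₊a₋`, where `a±` is the positive generator of the image of `v ↦ v·B±` on `N±`, then the
quotient `W = (N₊ ⊕ N₋)/⟨B₊ - B₋⟩` carries a well-defined integral symmetric bilinear form
extending those of `N₊` and `N₋`, with cross pairing
`v₊·v₋ = (v₊·B₊)(v₋·B₋)/B²`, in which `A₊ ⊥ N₋` and `A₋ ⊥ N₊`. -/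
theorem stmt_2
    (bP bM : (Fin 2 → ℤ) →ₗ[ℤ] (Fin 2 → ℤ) →ₗ[ℤ] ℤ)
    (hsymmP : ∀ x y, bP x y = bP y x) (hsymmM : ∀ x y, bM x y = bM y x)
    (ΔP ΔM : ℤ) (hΔP : 0 < ΔP) (hΔM : 0 < ΔM)
    (hdiscP : Matrix.det
      !![bP (Pi.single 0 1) (Pi.single 0 1), bP (Pi.single 0 1) (Pi.single 1 1);
         bP (Pi.single 1 1) (Pi.single 0 1), bP (Pi.single 1 1) (Pi.single 1 1)] = -ΔP)
    (hdiscM : Matrix.det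
      !![bM (Pi.single 0 1) (Pi.single 0 1), bM (Pi.single 0 1) (Pi.single 1 1);
         bM (Pi.single 1 1) (Pi.single 0 1), bM (Pi.single 1 1) (Pi.single 1 1)] = -ΔM)
    (AP AM : Fin 2 → ℤ)
    (hAPprim : ∀ (n : ℤ) (v : Fin 2 → ℤ), AP = n • v → IsUnit n)
    (hAMprim : ∀ (n : ℤ) (v : Fin 2 → ℤ), AM = n • v → IsUnit n)
    (hAPpos : 0 < bP AP AP) (hAMpos : 0 < bM AM AM)
    (BP BM : Fin 2 → ℤ)
    (hBPorth : bP AP BP = 0) (hBPne : BP ≠ 0)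
    (hBPgen : ∀ v, bP AP v = 0 → ∃ n : ℤ, v = n • BP)
    (hBMorth : bM AM BM = 0) (hBMne : BM ≠ 0)
    (hBMgen : ∀ v, bM AM v = 0 → ∃ n : ℤ, v = n • BM)
    (hBsq : bP BP BP = bM BM BM) (hBneg : bP BP BP < 0)
    (aP aM : ℤ) (haPpos : 0 < aP) (haMpos : 0 < aM)
    (haPmem : ∃ v, bP v BP = aP) (haPdvd : ∀ v, aP ∣ bP v BP)
    (haMmem : ∃ v, bM v BM = aM) (haMdvd : ∀ v, aM ∣ bM v BM)
    (hdvd : bP BP BP ∣ aP * aM) :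
    ∃ bW : (((Fin 2 → ℤ) × (Fin 2 → ℤ)) ⧸ stmt2Rel BP BM) →ₗ[ℤ]
           (((Fin 2 → ℤ) × (Fin 2 → ℤ)) ⧸ stmt2Rel BP BM) →ₗ[ℤ] ℤ,
      (∀ x y, bW x y = bW y x) ∧
      (∀ v w : Fin 2 → ℤ,
        bW ((stmt2Rel BP BM).mkQ (v, 0)) ((stmt2Rel BP BM).mkQ (w, 0)) = bP v w) ∧
      (∀ v w : Fin 2 → ℤ,
        bW ((stmt2Rel BP BM).mkQ (0, v)) ((stmt2Rel BP BM).mkQ (0, w)) = bM v w) ∧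
      (∀ v w : Fin 2 → ℤ,
        (bP BP BP) * bW ((stmt2Rel BP BM).mkQ (v, 0)) ((stmt2Rel BP BM).mkQ (0, w))
          = (bP v BP) * (bM w BM)) ∧
      (∀ w : Fin 2 → ℤ,
        bW ((stmt2Rel BP BM).mkQ (AP, 0)) ((stmt2Rel BP BM).mkQ (0, w)) = 0) ∧
      (∀ v : Fin 2 → ℤ,
        bW ((stmt2Rel BP BM).mkQ (v, 0)) ((stmt2Rel BP BM).mkQ (0, AM)) = 0) :=
  stmt_2_general bP bM hsymmP hsymmM AP AM BP BM hBPorth hBMorth hBsq hBneg aP aM haPdvd haMdvd hdvd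
end

section
/- Let $N_\pm$ be rank 2 lattices of signature $(1,1)$ with discriminants $-\Delta_\pm$, with positive vectors $A_\pm \in N_\pm$ and $k > 0$ satisfying $\Delta_+\Delta_- > k^2 A_+^2 A_-^2$. Let $B_\pm$ generate $A_\pm^\perp$ in $N_\pm$, form $W_k$ as above, and let $\Lambda_\pm$ be the orthogonal complement of $A_\mp$ in $W_k$. Suppose $H \in N_\pm$ satisfies $-H^2 B_\mp^2 (\Delta_+\Delta_- - k^2 A_+^2 A_-^2) \ge \Delta_\pm \Delta_+ \Delta_-$. Then for every $v \in \Lambda_\pm$ linearly independent of $H$, one has $(v\cdot H)^2 - v^2 H^2 \ge \Delta_\pm$. -/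
/-!
Write `v = x + n • B₋` with `x ∈ N₊` (orthogonality to `A₋` forces the `N₋`-part into `ℤ B₋`)
and put `D = cross2 x H`, so that `(x·H)² - x²H² = Δ₊ D²`. The cross pairing `c` kills `A₊` on the
left and `A₋` on the right, hence has rank one: `c(z, B₋) = γ · cross2 z A₊` for a rational slope `γ`,
and since `c` takes the value `k` and only multiples of `k`, `γ² ≤ k² · cross2 B₋ A₋ ²`. With the
discriminant identities for `(x, H)`, `(A₊, H)` and `(B₋, A₋)`, this exhibits `Δ₊ Q - Δ₊² n²`,
where `Q = (v·H)² - v²H²`, as a square plus `n²` times a quantity that the hypothesis on `H` makes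
nonnegative. So `Q ≥ Δ₊ n²`, which settles `n ≠ 0`; for `n = 0`, `Q = Δ₊ D²` with `D ≠ 0` by
linear independence.
-/

def cross2 (x y : Fin 2 → ℤ) : ℤ := x 0 * y 1 - x 1 * y 0

lemma cross2_smul_sub_cross2_smul_add_cross2_smul (x y z : Fin 2 → ℤ) :
    cross2 y z • x - cross2 x z • y + cross2 x y • z = 0 := by
  ext i; fin_cases i <;> simp [cross2] <;> ring

lemma cross2_mul_apply_sub_cross2_mul_apply_add (f : (Fin 2 → ℤ) →ₗ[ℤ] ℤ) (x y z : Fin 2 → ℤ) :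
    cross2 y z * f x - cross2 x z * f y + cross2 x y * f z = 0 := by
  simpa only [map_add, map_sub, map_smul, smul_eq_mul, map_zero] using
    congrArg f (cross2_smul_sub_cross2_smul_add_cross2_smul x y z)

lemma cross2_mul_apply_eq_of_apply_eq_zero (f : (Fin 2 → ℤ) →ₗ[ℤ] ℤ) {a : Fin 2 → ℤ}
    (ha : f a = 0) (x y : Fin 2 → ℤ) : cross2 x a * f y = cross2 y a * f x := by
  linear_combination cross2_mul_apply_sub_cross2_mul_apply_add f y x a - cross2 y x * ha

lemma eq_zero_of_forall_cross2_eq_zero {a : Fin 2 → ℤ} (h : ∀ z, cross2 z a = 0) : a = 0 := by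
  have h0 := h (Pi.single 1 1)
  have h1 := h (Pi.single 0 1)
  simp [cross2] at h0 h1
  ext i; fin_cases i <;> simp [h0, h1]

lemma cross2_ne_zero_of_apply_ne_zero (f : (Fin 2 → ℤ) →ₗ[ℤ] ℤ) {a v : Fin 2 → ℤ}
    (ha : f a = 0) (ha0 : a ≠ 0) (hv : f v ≠ 0) : cross2 v a ≠ 0 := by
  refine fun hva => ha0 (eq_zero_of_forall_cross2_eq_zero fun z => ?_)
  have := cross2_mul_apply_eq_of_apply_eq_zero f ha v z
  rw [hva, zero_mul] at this
  exact (mul_eq_zero.mp this.symm).resolve_right hv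

lemma cross2_ne_zero_of_linearIndependent {x y : Fin 2 → ℤ} (h : LinearIndependent ℤ ![x, y]) :
    cross2 x y ≠ 0 := by
  intro hxy
  have hcomb : ∀ i, y i • x + (-x i) • y = 0 := by
    intro i; ext j; fin_cases i <;> fin_cases j <;> simp [cross2] at hxy ⊢ <;> linarith
  have hx : x = 0 := by
    ext i; exact neg_eq_zero.mp (LinearIndependent.pair_iff.mp h _ _ (hcomb i)).2
  exact h.ne_zero 0 (by simp [hx])

lemma sq_sub_mul_eq_mul_cross2_sq (b : (Fin 2 → ℤ) →ₗ[ℤ] (Fin 2 → ℤ) →ₗ[ℤ] ℤ)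
    (hsymm : ∀ x y, b x y = b y x) {Δ : ℤ}
    (hdisc : Matrix.det
      !![b (Pi.single 0 1) (Pi.single 0 1), b (Pi.single 0 1) (Pi.single 1 1);
         b (Pi.single 1 1) (Pi.single 0 1), b (Pi.single 1 1) (Pi.single 1 1)] = -Δ)
    (x y : Fin 2 → ℤ) : b x y ^ 2 - b x x * b y y = Δ * cross2 x y ^ 2 := by
  have hdecomp : ∀ z : Fin 2 → ℤ, z = z 0 • Pi.single 0 1 + z 1 • Pi.single 1 1 := by
    intro z; ext i; fin_cases i <;> simp
  rw [Matrix.det_fin_two_of] at hdisc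
  conv_lhs => rw [hdecomp x, hdecomp y]
  simp only [map_add, map_smul, LinearMap.add_apply, LinearMap.smul_apply, smul_eq_mul]
  rw [hsymm (Pi.single 1 1) (Pi.single 0 1)] at hdisc ⊢
  unfold cross2
  linear_combination (-(x 0 * y 1 - x 1 * y 0) ^ 2) * hdisc

lemma sq_apply_le_of_dvd (f : (Fin 2 → ℤ) →ₗ[ℤ] ℤ) {a u w : Fin 2 → ℤ} {k : ℤ}
    (ha : f a = 0) (hw : f w = k) (hk : k ≠ 0) (hdvd : k ∣ f u) (hu : cross2 u a ≠ 0) :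
    f u ^ 2 ≤ k ^ 2 * cross2 u a ^ 2 := by
  obtain ⟨d, hd⟩ := hdvd
  have hdw : d * cross2 w a = cross2 u a := by
    have := cross2_mul_apply_eq_of_apply_eq_zero f ha u w
    rw [hw, hd] at this
    exact mul_left_cancel₀ hk (by linear_combination -this)
  have hw0 : 1 ≤ cross2 w a ^ 2 :=
    (one_le_sq_iff_one_le_abs _).mpr (Int.one_le_abs fun h => hu (by simp [← hdw, h]))
  rw [hd, ← hdw]
  nlinarith [sq_nonneg (k * d)]

lemma exists_cross2_ne_zero_and_sq_le (c : (Fin 2 → ℤ) →ₗ[ℤ] (Fin 2 → ℤ) →ₗ[ℤ] ℤ)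
    {a b u : Fin 2 → ℤ} {k : ℤ} (ha : ∀ w, c a w = 0) (hb : ∀ v, c v b = 0) (ha0 : a ≠ 0)
    (hk : k ≠ 0) (hdvd : ∀ v w, k ∣ c v w) (hgen : ∃ v w, c v w = k) (hu : cross2 u b ≠ 0) :
    ∃ v, cross2 v a ≠ 0 ∧ c v u ^ 2 ≤ k ^ 2 * cross2 u b ^ 2 * cross2 v a ^ 2 := by
  obtain ⟨v, w, hvw⟩ := hgen
  have hva : cross2 v a ≠ 0 :=
    cross2_ne_zero_of_apply_ne_zero (c.flip w) (ha w) ha0 (by simpa [hvw] using hk)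
  have hcu := sq_apply_le_of_dvd (c v) (hb v) hvw hk (hdvd v u) hu
  have hva2 : 1 ≤ cross2 v a ^ 2 := (one_le_sq_iff_one_le_abs _).mpr (Int.one_le_abs hva)
  exact ⟨v, hva, by nlinarith [sq_nonneg (k * cross2 u b)]⟩

lemma mul_sq_le_of_slope_bound {Δ P xx HH D AH AA fx fH Cx CH fv Cv BB K n : ℤ} (hΔ : 0 < Δ)
    (hD : P ^ 2 - xx * HH = Δ * D ^ 2) (hAH : AH ^ 2 - AA * HH = Δ * fH ^ 2)
    (hP : fH * P - fx * HH + D * AH = 0) (hCx : fv * Cx = fx * Cv) (hCH : fv * CH = fH * Cv)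
    (hfv : fv ≠ 0) (hCv : Cv ^ 2 ≤ K * fv ^ 2) (hAAHH : 0 ≤ AA * HH)
    (hK : K * AA * HH ≤ Δ * (-BB * HH - Δ)) :
    Δ * n ^ 2 ≤ (P + n * CH) ^ 2 - (xx + 2 * n * Cx + n ^ 2 * BB) * HH := by
  have hsos : fv ^ 2 * (Δ * ((P + n * CH) ^ 2 - (xx + 2 * n * Cx + n ^ 2 * BB) * HH - Δ * n ^ 2))
      = (Δ * fv * D - n * Cv * AH) ^ 2
        + n ^ 2 * (fv ^ 2 * Δ * (-BB * HH - Δ) - Cv ^ 2 * AA * HH) := by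
    linear_combination fv ^ 2 * Δ * hD + 2 * n * Δ * fv * (P * hCH - HH * hCx + Cv * hP)
      + n ^ 2 * (Δ * (fv * CH + fH * Cv) * hCH - Cv ^ 2 * hAH)
  have hrest : 0 ≤ fv ^ 2 * Δ * (-BB * HH - Δ) - Cv ^ 2 * AA * HH := by
    nlinarith [mul_le_mul_of_nonneg_right hCv hAAHH, mul_le_mul_of_nonneg_left hK (sq_nonneg fv)]
  have h0 : 0 ≤ Δ * ((P + n * CH) ^ 2 - (xx + 2 * n * Cx + n ^ 2 * BB) * HH - Δ * n ^ 2) :=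
    nonneg_of_mul_nonneg_right (by rw [hsos]; positivity) (by positivity)
  linarith [nonneg_of_mul_nonneg_right h0 hΔ]

lemma pos_and_ne_zero_of_gap {ΔP ΔM k AA AM2 BB HH g : ℤ} (hΔP : 0 < ΔP) (hΔM : 0 < ΔM)
    (hAM2 : 0 < AM2) (hsig : k ^ 2 * AA * AM2 < ΔP * ΔM) (hg : ΔM * g ^ 2 = -(BB * AM2))
    (hH : -HH * BB * (ΔP * ΔM - k ^ 2 * AA * AM2) ≥ ΔP * (ΔP * ΔM)) :
    0 < HH ∧ g ≠ 0 := by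
  have hpos := mul_pos hΔP (mul_pos hΔP hΔM)
  have hBB : BB ≤ 0 := by nlinarith [sq_nonneg g]
  refine ⟨?_, fun hg0 => ?_⟩
  · by_contra! hHH
    nlinarith [mul_nonneg (mul_nonneg_of_nonpos_of_nonpos hHH hBB) (sub_pos.2 hsig).le]
  · rw [hg0] at hg
    have hBB0 : BB = 0 := (mul_eq_zero.mp (by linear_combination hg)).resolve_right hAM2.ne'
    rw [hBB0] at hH
    nlinarith

lemma mul_sq_mul_le_of_gap {ΔP ΔM k AA AM2 BB HH g : ℤ} (hΔM : 0 < ΔM)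
    (hg : ΔM * g ^ 2 = -(BB * AM2))
    (hH : -HH * BB * (ΔP * ΔM - k ^ 2 * AA * AM2) ≥ ΔP * (ΔP * ΔM)) :
    k ^ 2 * g ^ 2 * AA * HH ≤ ΔP * (-BB * HH - ΔP) :=
  le_of_mul_le_mul_left (by linear_combination hH + k ^ 2 * AA * HH * hg) hΔM

lemma bilin_add_apply {W : Type*} [AddCommGroup W] [Module ℤ W] (bW : W →ₗ[ℤ] W →ₗ[ℤ] ℤ)
    (hsymmW : ∀ x y, bW x y = bW y x) (bP : (Fin 2 → ℤ) →ₗ[ℤ] (Fin 2 → ℤ) →ₗ[ℤ] ℤ)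
    (ιP ιM : (Fin 2 → ℤ) →ₗ[ℤ] W) (hWP : ∀ v w, bW (ιP v) (ιP w) = bP v w) (x y z : Fin 2 → ℤ) :
    bW (ιP x + ιM y) (ιP z) = bP x z + bW (ιP z) (ιM y) := by
  rw [map_add, LinearMap.add_apply, hWP, hsymmW (ιM y)]

lemma bilin_add_self {W : Type*} [AddCommGroup W] [Module ℤ W] (bW : W →ₗ[ℤ] W →ₗ[ℤ] ℤ)
    (hsymmW : ∀ x y, bW x y = bW y x) (bP bM : (Fin 2 → ℤ) →ₗ[ℤ] (Fin 2 → ℤ) →ₗ[ℤ] ℤ)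
    (ιP ιM : (Fin 2 → ℤ) →ₗ[ℤ] W) (hWP : ∀ v w, bW (ιP v) (ιP w) = bP v w)
    (hWM : ∀ v w, bW (ιM v) (ιM w) = bM v w) (x y : Fin 2 → ℤ) :
    bW (ιP x + ιM y) (ιP x + ιM y) = bP x x + 2 * bW (ιP x) (ιM y) + bM y y := by
  simp only [map_add, LinearMap.add_apply, hWP, hWM, hsymmW (ιM y) (ιP x)]
  ring

theorem le_sq_sub_mul_of_orthogonal {W : Type*} [AddCommGroup W] [Module ℤ W]
    (bP bM : (Fin 2 → ℤ) →ₗ[ℤ] (Fin 2 → ℤ) →ₗ[ℤ] ℤ)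
    (hsymmP : ∀ x y, bP x y = bP y x) (hsymmM : ∀ x y, bM x y = bM y x)
    {ΔP ΔM : ℤ} (hΔP : 0 < ΔP) (hΔM : 0 < ΔM)
    (hdiscP : Matrix.det
      !![bP (Pi.single 0 1) (Pi.single 0 1), bP (Pi.single 0 1) (Pi.single 1 1);
         bP (Pi.single 1 1) (Pi.single 0 1), bP (Pi.single 1 1) (Pi.single 1 1)] = -ΔP)
    (hdiscM : Matrix.det
      !![bM (Pi.single 0 1) (Pi.single 0 1), bM (Pi.single 0 1) (Pi.single 1 1);
         bM (Pi.single 1 1) (Pi.single 0 1), bM (Pi.single 1 1) (Pi.single 1 1)] = -ΔM)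
    {AP AM : Fin 2 → ℤ} (hAPpos : 0 < bP AP AP) (hAMpos : 0 < bM AM AM)
    {BM : Fin 2 → ℤ} (hBMorth : bM AM BM = 0) (hBMgen : ∀ v, bM AM v = 0 → ∃ n : ℤ, v = n • BM)
    {k : ℤ} (hk : 0 < k) (hsig : k ^ 2 * (bP AP AP) * (bM AM AM) < ΔP * ΔM)
    (bW : W →ₗ[ℤ] W →ₗ[ℤ] ℤ) (hsymmW : ∀ x y, bW x y = bW y x)
    (ιP ιM : (Fin 2 → ℤ) →ₗ[ℤ] W) (hspan : ∀ v, ∃ x y, v = ιP x + ιM y)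
    (hWP : ∀ v w, bW (ιP v) (ιP w) = bP v w) (hWM : ∀ v w, bW (ιM v) (ιM w) = bM v w)
    (horthP : ∀ w, bW (ιP AP) (ιM w) = 0) (horthM : ∀ v, bW (ιP v) (ιM AM) = 0)
    (hcrossdvd : ∀ v w, k ∣ bW (ιP v) (ιM w)) (hcrossgen : ∃ v w, bW (ιP v) (ιM w) = k)
    {H : Fin 2 → ℤ}
    (hH : -(bP H H) * (bM BM BM) * (ΔP * ΔM - k ^ 2 * (bP AP AP) * (bM AM AM)) ≥ ΔP * (ΔP * ΔM))
    {v : W} (hv : bW v (ιM AM) = 0) (hli : LinearIndependent ℤ ![v, ιP H]) :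
    ΔP ≤ bW v (ιP H) ^ 2 - bW v v * bP H H := by
  obtain ⟨x, y, rfl⟩ := hspan v
  have hy : bM AM y = 0 := by simpa [hWM, horthM, hsymmM AM y] using hv
  obtain ⟨n, rfl⟩ := hBMgen y hy
  have hnD : n ≠ 0 ∨ cross2 x H ≠ 0 := by
    refine or_iff_not_imp_left.2 fun hn => cross2_ne_zero_of_linearIndependent ?_
    rw [not_not.mp hn, zero_smul, map_zero, add_zero] at hli
    exact LinearIndependent.of_comp ιP (by convert hli using 1; ext i; fin_cases i <;> rfl)
  have hBMAM : ΔM * cross2 BM AM ^ 2 = -(bM BM BM * bM AM AM) := by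
    have h := sq_sub_mul_eq_mul_cross2_sq bM hsymmM hdiscM BM AM
    rw [hsymmM BM AM, hBMorth] at h
    linear_combination -h
  obtain ⟨hHH, hgB⟩ := pos_and_ne_zero_of_gap hΔP hΔM hAMpos hsig hBMAM hH
  have hAP0 : AP ≠ 0 := by rintro rfl; simp at hAPpos
  obtain ⟨v₀, hfv, hCv⟩ := exists_cross2_ne_zero_and_sq_le (bW.compl₁₂ ιP ιM) horthP horthM hAP0
    hk.ne' hcrossdvd hcrossgen hgB
  have hslope := cross2_mul_apply_eq_of_apply_eq_zero ((bW.compl₁₂ ιP ιM).flip BM) (horthP BM) v₀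
  simp only [LinearMap.flip_apply, LinearMap.compl₁₂_apply] at hslope hCv
  have hAH : bP AP H ^ 2 - bP AP AP * bP H H = ΔP * cross2 H AP ^ 2 := by
    rw [hsymmP AP H]
    linear_combination sq_sub_mul_eq_mul_cross2_sq bP hsymmP hdiscP H AP
  have hD := sq_sub_mul_eq_mul_cross2_sq bP hsymmP hdiscP x H
  have hlow := mul_sq_le_of_slope_bound (n := n) hΔP hD hAH
    (cross2_mul_apply_sub_cross2_mul_apply_add (bP.flip H) x H AP) (hslope x) (hslope H) hfv
    hCv (mul_pos hAPpos hHH).le (mul_sq_mul_le_of_gap hΔM hBMAM hH)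
  rw [bilin_add_apply bW hsymmW bP ιP ιM hWP, bilin_add_self bW hsymmW bP bM ιP ιM hWP hWM]
  simp only [map_zsmul, LinearMap.smul_apply, smul_eq_mul]
  rcases eq_or_ne n 0 with rfl | hn
  · have : 1 ≤ cross2 x H ^ 2 :=
      (one_le_sq_iff_one_le_abs _).mpr (Int.one_le_abs (hnD.resolve_left (not_not.mpr rfl)))
    nlinarith
  · have : 1 ≤ n ^ 2 := (one_le_sq_iff_one_le_abs _).mpr (Int.one_le_abs hn)
    nlinarith

theorem stmt_4_general
    (bP bM : (Fin 2 → ℤ) →ₗ[ℤ] (Fin 2 → ℤ) →ₗ[ℤ] ℤ)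
    (hsymmP : ∀ x y, bP x y = bP y x) (hsymmM : ∀ x y, bM x y = bM y x)
    (ΔP ΔM : ℤ) (hΔP : 0 < ΔP) (hΔM : 0 < ΔM)
    (hdiscP : Matrix.det
      !![bP (Pi.single 0 1) (Pi.single 0 1), bP (Pi.single 0 1) (Pi.single 1 1);
         bP (Pi.single 1 1) (Pi.single 0 1), bP (Pi.single 1 1) (Pi.single 1 1)] = -ΔP)
    (hdiscM : Matrix.det
      !![bM (Pi.single 0 1) (Pi.single 0 1), bM (Pi.single 0 1) (Pi.single 1 1);
         bM (Pi.single 1 1) (Pi.single 0 1), bM (Pi.single 1 1) (Pi.single 1 1)] = -ΔM)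
    (AP AM : Fin 2 → ℤ) (hAPpos : 0 < bP AP AP) (hAMpos : 0 < bM AM AM)
    (BP BM : Fin 2 → ℤ)
    (hBPorth : bP AP BP = 0)
    (hBPgen : ∀ v, bP AP v = 0 → ∃ n : ℤ, v = n • BP)
    (hBMorth : bM AM BM = 0)
    (hBMgen : ∀ v, bM AM v = 0 → ∃ n : ℤ, v = n • BM)
    (k : ℤ) (hk : 0 < k)
    (hsig : k ^ 2 * (bP AP AP) * (bM AM AM) < ΔP * ΔM)
    (bW : ((Fin 2 → ℤ) × (Fin 2 → ℤ)) →ₗ[ℤ] ((Fin 2 → ℤ) × (Fin 2 → ℤ)) →ₗ[ℤ] ℤ)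
    (hsymmW : ∀ x y, bW x y = bW y x)
    (hWP : ∀ v w : Fin 2 → ℤ, bW (v, 0) (w, 0) = bP v w)
    (hWM : ∀ v w : Fin 2 → ℤ, bW (0, v) (0, w) = bM v w)
    (horthP : ∀ w : Fin 2 → ℤ, bW (AP, 0) (0, w) = 0)
    (horthM : ∀ v : Fin 2 → ℤ, bW (v, 0) (0, AM) = 0)
    (hcrossdvd : ∀ v w : Fin 2 → ℤ, k ∣ bW (v, 0) (0, w))
    (hcrossgen : ∃ v w : Fin 2 → ℤ, bW (v, 0) (0, w) = k) :
    (∀ H : Fin 2 → ℤ,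
      -(bP H H) * (bM BM BM) * (ΔP * ΔM - k ^ 2 * (bP AP AP) * (bM AM AM)) ≥ ΔP * (ΔP * ΔM) →
      ∀ v : (Fin 2 → ℤ) × (Fin 2 → ℤ), bW v (0, AM) = 0 →
        LinearIndependent ℤ ![v, ((H, 0) : (Fin 2 → ℤ) × (Fin 2 → ℤ))] →
        (bW v (H, 0)) ^ 2 - (bW v v) * (bP H H) ≥ ΔP) ∧
    (∀ H : Fin 2 → ℤ,
      -(bM H H) * (bP BP BP) * (ΔP * ΔM - k ^ 2 * (bP AP AP) * (bM AM AM)) ≥ ΔM * (ΔP * ΔM) →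
      ∀ v : (Fin 2 → ℤ) × (Fin 2 → ℤ), bW v (AP, 0) = 0 →
        LinearIndependent ℤ ![v, ((0, H) : (Fin 2 → ℤ) × (Fin 2 → ℤ))] →
        (bW v (0, H)) ^ 2 - (bW v v) * (bM H H) ≥ ΔM) := by
  refine ⟨fun H hH v hv hli => ?_, fun H hH v hv hli => ?_⟩
  · exact le_sq_sub_mul_of_orthogonal bP bM hsymmP hsymmM hΔP hΔM hdiscP hdiscM hAPpos hAMpos
      hBMorth hBMgen hk hsig bW hsymmW (LinearMap.inl ℤ _ _) (LinearMap.inr ℤ _ _)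
      (fun v => ⟨v.1, v.2, by simp⟩) hWP hWM horthP horthM hcrossdvd hcrossgen hH hv hli
  · exact le_sq_sub_mul_of_orthogonal bM bP hsymmM hsymmP hΔM hΔP hdiscM hdiscP hAMpos hAPpos
      hBPorth hBPgen hk (by linarith) bW hsymmW (LinearMap.inr ℤ _ _) (LinearMap.inl ℤ _ _)
      (fun v => ⟨v.2, v.1, by simp⟩) hWM hWP (fun w => (hsymmW _ _).trans (horthM w))
      (fun v => (hsymmW _ _).trans (horthP v)) (fun v w => hsymmW _ _ ▸ hcrossdvd w v)
      (by obtain ⟨v, w, h⟩ := hcrossgen; exact ⟨w, v, (hsymmW _ _).trans h⟩)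
      (by linear_combination hH) hv hli

/-- Lemma 7.2: with `W_k = N₊ ⊕ N₋` (where `A± ⊥ N∓` and the cross-pairing is generated
by `k > 0`, and `Δ₊Δ₋ > k²A₊²A₋²`), `B±` generating `A±^⊥` in `N±`, and `Λ±` the
orthogonal complement of `A∓` in `W_k`: if `H ∈ N±` satisfies
`-H²B∓²(Δ₊Δ₋ - k²A₊²A₋²) ≥ Δ±Δ₊Δ₋`, then `(v·H)² - v²H² ≥ Δ±` for every `v ∈ Λ±`
linearly independent of `H`. (Both choices of sign are stated.) -/
theorem stmt_4
    (bP bM : (Fin 2 → ℤ) →ₗ[ℤ] (Fin 2 → ℤ) →ₗ[ℤ] ℤ)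
    (hsymmP : ∀ x y, bP x y = bP y x) (hsymmM : ∀ x y, bM x y = bM y x)
    (ΔP ΔM : ℤ) (hΔP : 0 < ΔP) (hΔM : 0 < ΔM)
    (hdiscP : Matrix.det
      !![bP (Pi.single 0 1) (Pi.single 0 1), bP (Pi.single 0 1) (Pi.single 1 1);
         bP (Pi.single 1 1) (Pi.single 0 1), bP (Pi.single 1 1) (Pi.single 1 1)] = -ΔP)
    (hdiscM : Matrix.det
      !![bM (Pi.single 0 1) (Pi.single 0 1), bM (Pi.single 0 1) (Pi.single 1 1);
         bM (Pi.single 1 1) (Pi.single 0 1), bM (Pi.single 1 1) (Pi.single 1 1)] = -ΔM)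
    (AP AM : Fin 2 → ℤ) (hAPpos : 0 < bP AP AP) (hAMpos : 0 < bM AM AM)
    (BP BM : Fin 2 → ℤ)
    (hBPorth : bP AP BP = 0) (hBPne : BP ≠ 0)
    (hBPgen : ∀ v, bP AP v = 0 → ∃ n : ℤ, v = n • BP)
    (hBMorth : bM AM BM = 0) (hBMne : BM ≠ 0)
    (hBMgen : ∀ v, bM AM v = 0 → ∃ n : ℤ, v = n • BM)
    (k : ℤ) (hk : 0 < k)
    (hsig : k ^ 2 * (bP AP AP) * (bM AM AM) < ΔP * ΔM)
    (bW : ((Fin 2 → ℤ) × (Fin 2 → ℤ)) →ₗ[ℤ] ((Fin 2 → ℤ) × (Fin 2 → ℤ)) →ₗ[ℤ] ℤ)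
    (hsymmW : ∀ x y, bW x y = bW y x)
    (hWP : ∀ v w : Fin 2 → ℤ, bW (v, 0) (w, 0) = bP v w)
    (hWM : ∀ v w : Fin 2 → ℤ, bW (0, v) (0, w) = bM v w)
    (horthP : ∀ w : Fin 2 → ℤ, bW (AP, 0) (0, w) = 0)
    (horthM : ∀ v : Fin 2 → ℤ, bW (v, 0) (0, AM) = 0)
    (hcrossdvd : ∀ v w : Fin 2 → ℤ, k ∣ bW (v, 0) (0, w))
    (hcrossgen : ∃ v w : Fin 2 → ℤ, bW (v, 0) (0, w) = k) :
    (∀ H : Fin 2 → ℤ,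
      -(bP H H) * (bM BM BM) * (ΔP * ΔM - k ^ 2 * (bP AP AP) * (bM AM AM)) ≥ ΔP * (ΔP * ΔM) →
      ∀ v : (Fin 2 → ℤ) × (Fin 2 → ℤ), bW v (0, AM) = 0 →
        LinearIndependent ℤ ![v, ((H, 0) : (Fin 2 → ℤ) × (Fin 2 → ℤ))] →
        (bW v (H, 0)) ^ 2 - (bW v v) * (bP H H) ≥ ΔP) ∧
    (∀ H : Fin 2 → ℤ,
      -(bM H H) * (bP BP BP) * (ΔP * ΔM - k ^ 2 * (bP AP AP) * (bM AM AM)) ≥ ΔM * (ΔP * ΔM) →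
      ∀ v : (Fin 2 → ℤ) × (Fin 2 → ℤ), bW v (AP, 0) = 0 →
        LinearIndependent ℤ ![v, ((0, H) : (Fin 2 → ℤ) × (Fin 2 → ℤ))] →
        (bW v (0, H)) ^ 2 - (bW v v) * (bM H H) ≥ ΔM) :=
  stmt_4_general bP bM hsymmP hsymmM ΔP ΔM hΔP hΔM hdiscP hdiscM AP AM hAPpos hAMpos BP BM hBPorth
    hBPgen hBMorth hBMgen k hk hsig bW hsymmW hWP hWM horthP horthM hcrossdvd hcrossgen
end

section
/- Let $W_1$ be the rank 4 lattice with Gram matrix $\begin{pmatrix} 4 & 11 & 1 & 0 \\ 11 & 24 & 0 & 0 \\ 1 & 0 & 4 & 11 \\ 0 & 0 & 11 & 24 \end{pmatrix}$ in basis $G_+, A_+, G_-, A_-$. Then the vector $K := G_+ + A_+ - G_- - A_-$ satisfies $K^2 = 98$, and $K \cdot w \equiv 0 \pmod 7$ for every $w \in W_1$; hence adjoining $\frac{1}{7}K$ to $W_1$ yields an integral overlattice of index 7. -/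
open Matrix
/-- The Gram matrix of the rank 4 lattice `W₁` in basis `G₊, A₊, G₋, A₋`. -/
def stmt11Gram : Matrix (Fin 4) (Fin 4) ℤ :=
  !![4, 11, 1, 0; 11, 24, 0, 0; 1, 0, 4, 11; 0, 0, 11, 24]

/-!
The vector `K` pairs with the basis `G₊, A₊, G₋, A₋` to `14, 35, -14, -35`, all multiples of `7`,
and `K² = 98 = 2 · 7²`. Writing elements of `W₁ + ℤ · K/7` as `w + k · K/7` and expanding
bilinearly, every pairing is therefore an integer. Since `7 · K/7 ∈ W₁`, the index divides `7`,
and it is not `1` because the first coordinate of `K/7` is `1/7`.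
-/

open Submodule

section IntegralVectors

variable {ι : Type*} [Fintype ι]

theorem mem_span_range_single_one_iff [DecidableEq ι] {x : ι → ℚ} :
    x ∈ span ℤ (Set.range fun i => (Pi.single i 1 : ι → ℚ)) ↔ ∃ a : ι → ℤ, Int.cast ∘ a = x := by
  rw [mem_span_range_iff_exists_fun]
  refine exists_congr fun a => Eq.congr_left ?_
  conv_rhs => rw [← Finset.univ_sum_single (Int.cast ∘ a : ι → ℚ)]
  simp [← Pi.single_smul]

theorem intCast_comp_dotProduct_mulVec (G : Matrix ι ι ℤ) (a b : ι → ℤ) :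
    (Int.cast ∘ a : ι → ℚ) ⬝ᵥ G.map Int.cast *ᵥ (Int.cast ∘ b) = ((a ⬝ᵥ G *ᵥ b : ℤ) : ℚ) := by
  rw [← eq_intCast (Int.castRingHom ℚ), RingHom.map_dotProduct]
  congr 1
  funext i
  exact ((Int.castRingHom ℚ).map_mulVec G b i).symm

end IntegralVectors

theorem smul_mem_of_mem_sup_span_singleton {R M : Type*} [CommRing R] [AddCommGroup M] [Module R M]
    {W : Submodule R M} {n : R} {v : M} (hv : n • v ∈ W) {x : M} (hx : x ∈ W ⊔ R ∙ v) :
    n • x ∈ W := by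
  obtain ⟨w, hw, z, hz, rfl⟩ := mem_sup.mp hx
  obtain ⟨k, rfl⟩ := mem_span_singleton.mp hz
  rw [smul_add, smul_comm]
  exact W.add_mem (W.smul_mem n hw) (W.smul_mem k hv)

theorem Matrix.IsSymm.dotProduct_mulVec_comm {ι R : Type*} [Fintype ι] [CommSemiring R]
    {G : Matrix ι ι R} (hG : G.IsSymm) (a b : ι → R) : a ⬝ᵥ G *ᵥ b = b ⬝ᵥ G *ᵥ a := by
  rw [dotProduct_mulVec, dotProduct_comm, ← mulVec_transpose, hG.eq]

section Overlattice

variable {ι : Type*} [Fintype ι] [DecidableEq ι] {G : Matrix ι ι ℤ} {K : ι → ℤ} {n : ℤ}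
  {v : ι → ℚ}

theorem exists_intCast_eq_dotProduct_mulVec_of_mem_sup (hG : G.IsSymm) (hn : n ≠ 0)
    (hv : (n : ℚ) • v = Int.cast ∘ K) (hK : ∀ w, n ∣ K ⬝ᵥ G *ᵥ w) (hKK : n ^ 2 ∣ K ⬝ᵥ G *ᵥ K)
    {x y : ι → ℚ} (hx : x ∈ span ℤ (Set.range fun i => (Pi.single i 1 : ι → ℚ)) ⊔ ℤ ∙ v)
    (hy : y ∈ span ℤ (Set.range fun i => (Pi.single i 1 : ι → ℚ)) ⊔ ℤ ∙ v) :
    ∃ m : ℤ, x ⬝ᵥ G.map Int.cast *ᵥ y = m := by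
  set M : Matrix ι ι ℚ := G.map Int.cast
  set N : AddSubgroup ℚ := (Int.castAddHom ℚ).range
  have hn' : (n : ℚ) ≠ 0 := Int.cast_ne_zero.mpr hn
  have intCast_mem {q : ℚ} (p : ℤ) (h : (p : ℚ) = q) : q ∈ N := ⟨p, h⟩
  have hWW (a b : ι → ℤ) : Int.cast ∘ a ⬝ᵥ M *ᵥ Int.cast ∘ b ∈ N :=
    intCast_mem _ (intCast_comp_dotProduct_mulVec G a b).symm
  have hvK (y : ι → ℚ) : (n : ℚ) * (v ⬝ᵥ M *ᵥ y) = Int.cast ∘ K ⬝ᵥ M *ᵥ y := by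
    rw [← hv, smul_dotProduct, smul_eq_mul]
  have hKv (x : ι → ℚ) : (n : ℚ) * (x ⬝ᵥ M *ᵥ v) = x ⬝ᵥ M *ᵥ Int.cast ∘ K := by
    rw [← hv, mulVec_smul, dotProduct_smul, smul_eq_mul]
  have hvW (b : ι → ℤ) : v ⬝ᵥ M *ᵥ Int.cast ∘ b ∈ N := by
    obtain ⟨p, hp⟩ := hK b
    refine intCast_mem p (mul_left_cancel₀ hn' ?_)
    rw [hvK, intCast_comp_dotProduct_mulVec, hp]
    push_cast; ring
  have hWv (a : ι → ℤ) : Int.cast ∘ a ⬝ᵥ M *ᵥ v ∈ N := by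
    obtain ⟨p, hp⟩ := hK a
    refine intCast_mem p (mul_left_cancel₀ hn' ?_)
    rw [hKv, intCast_comp_dotProduct_mulVec, hG.dotProduct_mulVec_comm, hp]
    push_cast; ring
  have hvv : v ⬝ᵥ M *ᵥ v ∈ N := by
    obtain ⟨r, hr⟩ := hKK
    refine intCast_mem r (mul_left_cancel₀ (pow_ne_zero 2 hn') ?_)
    rw [sq, mul_assoc _ _ (v ⬝ᵥ M *ᵥ v), hKv, hvK, intCast_comp_dotProduct_mulVec, hr]
    push_cast; ring
  obtain ⟨x', hx', _, hkv, rfl⟩ := mem_sup.mp hx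
  obtain ⟨y', hy', _, hlv, rfl⟩ := mem_sup.mp hy
  obtain ⟨a, rfl⟩ := mem_span_range_single_one_iff.mp hx'
  obtain ⟨b, rfl⟩ := mem_span_range_single_one_iff.mp hy'
  obtain ⟨k, rfl⟩ := mem_span_singleton.mp hkv
  obtain ⟨l, rfl⟩ := mem_span_singleton.mp hlv
  suffices (Int.cast ∘ a + k • v) ⬝ᵥ M *ᵥ (Int.cast ∘ b + l • v) ∈ N from
    let ⟨m, hm⟩ := this; ⟨m, hm.symm⟩
  simp only [add_dotProduct, dotProduct_add, mulVec_add, mulVec_smul, smul_dotProduct,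
    dotProduct_smul]
  exact add_mem (add_mem (hWW a b) (zsmul_mem (hvW b) k))
    (zsmul_mem (add_mem (hWv a) (zsmul_mem hvv k)) l)

end Overlattice

theorem stmt11Gram_isSymm : stmt11Gram.IsSymm := by
  decide

theorem dotProduct_stmt11Gram_mulVec (w : Fin 4 → ℤ) :
    ![1, 1, -1, -1] ⬝ᵥ stmt11Gram *ᵥ w = 7 * (2 * w 0 + 5 * w 1 - 2 * w 2 - 5 * w 3) := by
  simp only [dotProduct, mulVec, stmt11Gram, Fin.sum_univ_four, of_apply, cons_val',
    cons_val_fin_one, cons_val_zero, cons_val_one, cons_val]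
  ring

/-- The vector `K = G₊ + A₊ - G₋ - A₋` satisfies `K² = 98` and `K·w ≡ 0 (mod 7)` for all
`w ∈ W₁`; hence adjoining `K/7` to `W₁` yields an integral overlattice of index 7. -/
theorem stmt_11 :
    (![1, 1, -1, -1] : Fin 4 → ℤ) ⬝ᵥ stmt11Gram.mulVec ![1, 1, -1, -1] = 98 ∧
    (∀ w : Fin 4 → ℤ, (7 : ℤ) ∣ (![1, 1, -1, -1] : Fin 4 → ℤ) ⬝ᵥ stmt11Gram.mulVec w) ∧
    (let Wspan : Submodule ℤ (Fin 4 → ℚ) :=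
      Submodule.span ℤ (Set.range fun i => (Pi.single i 1 : Fin 4 → ℚ))
     let Kq : Fin 4 → ℚ := ![1, 1, -1, -1]
     let L' : Submodule ℤ (Fin 4 → ℚ) := Wspan ⊔ Submodule.span ℤ {(7 : ℚ)⁻¹ • Kq}
     (∀ x ∈ L', ∀ y ∈ L',
        ∃ m : ℤ, x ⬝ᵥ (stmt11Gram.map (Int.cast : ℤ → ℚ)).mulVec y = (m : ℚ)) ∧
     (7 : ℚ)⁻¹ • Kq ∉ Wspan ∧ (∀ x ∈ L', (7 : ℤ) • x ∈ Wspan)) := by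
  have hKK : (![1, 1, -1, -1] : Fin 4 → ℤ) ⬝ᵥ stmt11Gram *ᵥ ![1, 1, -1, -1] = 98 := by
    decide
  have hK (w : Fin 4 → ℤ) : (7 : ℤ) ∣ ![1, 1, -1, -1] ⬝ᵥ stmt11Gram *ᵥ w :=
    ⟨_, dotProduct_stmt11Gram_mulVec w⟩
  refine ⟨hKK, hK, ?_⟩
  intro Wspan Kq L'
  have hv : ((7 : ℤ) : ℚ) • ((7 : ℚ)⁻¹ • Kq) = Int.cast ∘ (![1, 1, -1, -1] : Fin 4 → ℤ) := by
    ext i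
    fin_cases i <;> norm_num [Kq]
  refine ⟨fun x hx y hy => ?_, ?_, fun x hx => smul_mem_of_mem_sup_span_singleton ?_ hx⟩
  · exact exists_intCast_eq_dotProduct_mulVec_of_mem_sup stmt11Gram_isSymm (by norm_num) hv hK
      (by rw [hKK]; norm_num) hx hy
  · intro hW
    obtain ⟨a, ha⟩ := mem_span_range_single_one_iff.mp hW
    have h7 : (7 : ℚ) * a 0 = 1 := by
      rw [show (a 0 : ℚ) = 7⁻¹ by simpa [Kq] using congrFun ha 0]
      norm_num
    have : 7 * a 0 = 1 := by exact_mod_cast h7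
    omega
  · rw [← Int.cast_smul_eq_zsmul ℚ, hv]
    exact mem_span_range_single_one_iff.mpr ⟨_, rfl⟩
end
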